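/- Let a be a real number, let f : ℝ → ℝ be convex on [a, ∞) and g : ℝ → ℝ be concave on [a, ∞), with g(z) ≤ f(z) for all z ≥ a and f(z) − g(z) → 0 as z → ∞. Then there exists a unique pair of real numbers (κ, b) such that g(z) ≤ κ·z + b ≤ f(z) for all z ≥ a; moreover f(z) − (κ·z + b) → 0 and (κ·z + b) − g(z) → 0 as z → ∞. -/

import Mathlib

/-!
The difference `f - g` is convex and tends to `0`, so it is antitone; hence on every interval
the secant slope of `f` is at most that of `g`. Since slopes of the convex `f` increase and
slopes of the concave `g` decrease, every slope of `f` is at most every slope of `g`, and a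
separating slope `κ` exists. Then `f z - κ z` is antitone, `g z - κ z` is monotone and lies below
it, so an intercept `b` separates them too. Any affine function between `g` and `f` is squeezed
to both of them at infinity, and two such affine functions differ by an affine function tending
to `0`, which must vanish.
-/

open Filter Set Topology

theorem exists_forall_le_le_of_forall_le {ι α : Type*} [ConditionallyCompleteLattice α]
    [Nonempty α] {u v : ι → α} (h : ∀ i j, u i ≤ v j) : ∃ c, ∀ i, u i ≤ c ∧ c ≤ v i := by
  cases isEmpty_or_nonempty ι with
  | inl _ => exact ⟨Classical.arbitrary α, isEmptyElim⟩
  | inr _ =>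
    exact ⟨⨆ i, u i, fun i =>
      ⟨le_ciSup ⟨v i, forall_mem_range.2 fun j => h j i⟩ i, ciSup_le fun j => h j i⟩⟩

theorem exists_between_of_antitoneOn_of_monotoneOn {α β : Type*} [LinearOrder α]
    [ConditionallyCompleteLattice β] [Nonempty β] {s : Set α} {F G : α → β}
    (hF : AntitoneOn F s) (hG : MonotoneOn G s) (hGF : ∀ z ∈ s, G z ≤ F z) :
    ∃ b, ∀ z ∈ s, G z ≤ b ∧ b ≤ F z := by
  obtain ⟨b, hb⟩ := exists_forall_le_le_of_forall_le (u := fun z : s => G z) (v := fun z => F z)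
    fun ⟨x, hx⟩ ⟨y, hy⟩ => by
      rcases le_total x y with hxy | hyx
      · exact (hG hx hy hxy).trans (hGF y hy)
      · exact (hGF x hx).trans (hF hy hx hyx)
  exact ⟨b, fun z hz => hb ⟨z, hz⟩⟩

theorem slope_sub_const_mul {𝕜 : Type*} [Field 𝕜] {x y : 𝕜} (f : 𝕜 → 𝕜) (κ : 𝕜) (hxy : x ≠ y) :
    slope (fun z => f z - κ * z) x y = slope f x y - κ := by
  have hyx : y - x ≠ 0 := sub_ne_zero.2 hxy.symm
  rw [slope_def_field, slope_def_field]
  field_simp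
  ring

section Slope

variable {𝕜 : Type*} [Field 𝕜] [LinearOrder 𝕜] [IsStrictOrderedRing 𝕜] {s : Set 𝕜}
  {f g : 𝕜 → 𝕜} {x y u v : 𝕜}

theorem ConvexOn.slope_le_slope (hf : ConvexOn 𝕜 s f) (hx : x ∈ s) (hy : y ∈ s) (hu : u ∈ s)
    (hv : v ∈ s) (hxy : x < y) (huv : u < v) (hxu : x ≤ u) (hyv : y ≤ v) :
    slope f x y ≤ slope f u v :=
  calc slope f x y
      ≤ slope f x v := hf.slope_mono hx ⟨hy, hxy.ne'⟩ ⟨hv, (hxy.trans_le hyv).ne'⟩ hyv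
    _ = slope f v x := slope_comm f x v
    _ ≤ slope f v u := hf.slope_mono hv ⟨hx, (hxu.trans_lt huv).ne⟩ ⟨hu, huv.ne⟩ hxu
    _ = slope f u v := slope_comm f v u

theorem ConcaveOn.slope_le_slope (hg : ConcaveOn 𝕜 s g) (hx : x ∈ s) (hy : y ∈ s) (hu : u ∈ s)
    (hv : v ∈ s) (hxy : x < y) (huv : u < v) (hxu : x ≤ u) (hyv : y ≤ v) :
    slope g u v ≤ slope g x y := by
  simpa [slope_neg_fun] using hg.neg.slope_le_slope hx hy hu hv hxy huv hxu hyv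

theorem AntitoneOn.slope_le_slope_of_sub (hfg : AntitoneOn (f - g) s) (hx : x ∈ s)
    (hy : y ∈ s) : slope f x y ≤ slope g x y := by
  have h := hfg.slope_nonpos hx hy
  rw [slope_def_field] at h
  rw [slope_def_field, slope_def_field, ← sub_nonpos, ← sub_div]
  convert h using 2
  simp only [Pi.sub_apply]
  ring

theorem exists_antitoneOn_sub_mul_monotoneOn_sub_mul {s : Set ℝ} {f g : ℝ → ℝ}
    (hf : ConvexOn ℝ s f) (hg : ConcaveOn ℝ s g)
    (hfg : ∀ x ∈ s, ∀ y ∈ s, x < y → slope f x y ≤ slope g x y) :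
    ∃ κ : ℝ, AntitoneOn (fun z => f z - κ * z) s ∧ MonotoneOn (fun z => g z - κ * z) s := by
  let P := {p : ℝ × ℝ // p.1 ∈ s ∧ p.2 ∈ s ∧ p.1 < p.2}
  obtain ⟨κ, hκ⟩ := exists_forall_le_le_of_forall_le
    (u := fun p : P => slope f p.1.1 p.1.2) (v := fun p => slope g p.1.1 p.1.2)
    fun ⟨⟨x, y⟩, hx, hy, hxy⟩ ⟨⟨x', y'⟩, hx', hy', hxy'⟩ => by
      have hm : max x x' < max y y' := max_lt_max hxy hxy'
      have hms : max x x' ∈ s := by rcases le_total x x' with h | h <;> simp [h, hx, hx']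
      have hMs : max y y' ∈ s := by rcases le_total y y' with h | h <;> simp [h, hy, hy']
      calc slope f x y
          ≤ slope f (max x x') (max y y') :=
            hf.slope_le_slope hx hy hms hMs hxy hm (le_max_left _ _) (le_max_left _ _)
        _ ≤ slope g (max x x') (max y y') := hfg _ hms _ hMs hm
        _ ≤ slope g x' y' :=
            hg.slope_le_slope hx' hy' hms hMs hxy' hm (le_max_right _ _) (le_max_right _ _)
  refine ⟨κ, fun x hx y hy hxy => ?_, fun x hx y hy hxy => ?_⟩ <;>
    obtain rfl | hxy := hxy.eq_or_lt
  · exact le_rfl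
  · refine (slope_nonpos_iff_of_le (f := fun z => f z - κ * z) hxy.le).1 ?_
    rw [slope_sub_const_mul f κ hxy.ne, sub_nonpos]
    exact (hκ ⟨(x, y), hx, hy, hxy⟩).1
  · exact le_rfl
  · refine (slope_nonneg_iff_of_le (f := fun z => g z - κ * z) hxy.le).1 ?_
    rw [slope_sub_const_mul g κ hxy.ne, sub_nonneg]
    exact (hκ ⟨(x, y), hx, hy, hxy⟩).2

end Slope

theorem ConvexOn.antitoneOn_of_tendsto {a c : ℝ} {h : ℝ → ℝ} (hh : ConvexOn ℝ (Ici a) h)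
    (hlim : Tendsto h atTop (𝓝 c)) : AntitoneOn h (Ici a) := by
  intro x hx y hy hle
  by_contra! hlt
  have hxy : x < y := hle.lt_of_ne (by rintro rfl; exact lt_irrefl _ hlt)
  have hσ : 0 < slope h x y := (slope_pos_iff_of_le hxy.le).2 hlt
  have hlow : ∀ z, y ≤ z → h x + slope h x y * (z - x) ≤ h z := fun z hz => by
    have hs : slope h x y ≤ slope h x z :=
      hh.slope_mono hx ⟨hy, hxy.ne'⟩ ⟨hy.out.trans hz, (hxy.trans_le hz).ne'⟩ hz
    rw [slope_def_field h x z, le_div_iff₀ (by linarith)] at hs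
    linarith
  have hlin : Tendsto (fun z => h x + slope h x y * (z - x)) atTop atTop :=
    tendsto_atTop_add_const_left _ _ <|
      ((tendsto_atTop_add_const_right _ (-x) tendsto_id).const_mul_atTop hσ).congr fun z => by
        simp [sub_eq_add_neg]
  exact not_tendsto_atTop_of_tendsto_nhds hlim
    (tendsto_atTop_mono' _ ((eventually_ge_atTop y).mono hlow) hlin)

theorem tendsto_sub_of_le_of_le {α : Type*} {l : Filter α} {f g ℓ : α → ℝ}
    (hlim : Tendsto (fun z => f z - g z) l (𝓝 0)) (hgℓ : ∀ᶠ z in l, g z ≤ ℓ z)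
    (hℓf : ∀ᶠ z in l, ℓ z ≤ f z) :
    Tendsto (fun z => f z - ℓ z) l (𝓝 0) ∧ Tendsto (fun z => ℓ z - g z) l (𝓝 0) :=
  ⟨tendsto_of_tendsto_of_tendsto_of_le_of_le' tendsto_const_nhds hlim
      (hℓf.mono fun _ h => sub_nonneg.2 h) (hgℓ.mono fun _ h => by linarith),
    tendsto_of_tendsto_of_tendsto_of_le_of_le' tendsto_const_nhds hlim
      (hgℓ.mono fun _ h => sub_nonneg.2 h) (hℓf.mono fun _ h => by linarith)⟩

theorem eq_zero_of_tendsto_mul_add {c d : ℝ} (h : Tendsto (fun z => c * z + d) atTop (𝓝 0)) :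
    c = 0 ∧ d = 0 := by
  have hc : Tendsto (fun _ : ℝ => c) atTop (𝓝 0) := by
    convert (h.comp (tendsto_atTop_add_const_right _ 1 tendsto_id)).sub h using 1
    · funext z; simp only [Function.comp_apply, id]; ring
    · simp
  obtain rfl := tendsto_const_nhds_iff.1 hc
  exact ⟨rfl, by simpa using h⟩

/-- If `f` is convex on `[a, ∞)`, `g` is concave on `[a, ∞)`, `g ≤ f` there, and
`f - g → 0` at `∞`, then there is a unique affine function `z ↦ κ * z + b` lying
between `g` and `f` on `[a, ∞)`; moreover both `f` and `g` are asymptotic to it. -/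
theorem unique_asymptotic_affine_between_convex_concave
    (a : ℝ) (f g : ℝ → ℝ)
    (hf : ConvexOn ℝ (Set.Ici a) f)
    (hg : ConcaveOn ℝ (Set.Ici a) g)
    (hle : ∀ z, a ≤ z → g z ≤ f z)
    (hlim : Filter.Tendsto (fun z => f z - g z) Filter.atTop (nhds 0)) :
    (∃! p : ℝ × ℝ, ∀ z, a ≤ z → g z ≤ p.1 * z + p.2 ∧ p.1 * z + p.2 ≤ f z) ∧
    (∀ κ b : ℝ, (∀ z, a ≤ z → g z ≤ κ * z + b ∧ κ * z + b ≤ f z) →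
      Filter.Tendsto (fun z => f z - (κ * z + b)) Filter.atTop (nhds 0) ∧
      Filter.Tendsto (fun z => (κ * z + b) - g z) Filter.atTop (nhds 0)) := by
  have hasymp : ∀ κ b : ℝ, (∀ z, a ≤ z → g z ≤ κ * z + b ∧ κ * z + b ≤ f z) →
      Tendsto (fun z => f z - (κ * z + b)) atTop (𝓝 0) ∧
      Tendsto (fun z => (κ * z + b) - g z) atTop (𝓝 0) := fun κ b hκb =>
    tendsto_sub_of_le_of_le hlim ((eventually_ge_atTop a).mono fun z hz => (hκb z hz).1)
      ((eventually_ge_atTop a).mono fun z hz => (hκb z hz).2)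
  have hanti : AntitoneOn (f - g) (Ici a) := (hf.sub hg).antitoneOn_of_tendsto hlim
  obtain ⟨κ, hF, hG⟩ := exists_antitoneOn_sub_mul_monotoneOn_sub_mul hf hg
    fun x hx y hy _ => hanti.slope_le_slope_of_sub hx hy
  obtain ⟨b, hb⟩ := exists_between_of_antitoneOn_of_monotoneOn hF hG
    fun z hz => sub_le_sub_right (hle z hz) _
  have hκb : ∀ z, a ≤ z → g z ≤ κ * z + b ∧ κ * z + b ≤ f z := fun z hz => by
    obtain ⟨hgb, hbf⟩ := hb z hz
    constructor <;> linarith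
  refine ⟨⟨(κ, b), hκb, fun ⟨κ', b'⟩ hκb' => ?_⟩, hasymp⟩
  obtain ⟨hdκ, hdb⟩ := eq_zero_of_tendsto_mul_add (c := κ' - κ) (d := b' - b) <| by
    convert (hasymp κ b hκb).1.sub (hasymp κ' b' hκb').1 using 2 <;> ring
  ext <;> simp only <;> linarith
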